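/- arXiv:2003.12034 — 8 statements merged into one kernel-verified Lean document; each statement's English description precedes it below -/
import Mathlib

section
/- Fix σ > 0, σ_J > 0 and p > 0, and define R(p, γ) = log₂(1 + p·σ²/(2·(1 + γ·σ_J²) + (1 + γ·σ_J²)²/(p·σ²))) for γ ≥ 0. Then the function γ ↦ R(p, γ) is convex on [0, ∞). -/
/-!
With `a = p σ²` and `u = 1 + γ σ_J²`, the argument of the logarithm is
`1 + a / (2u + u²/a) = (u + a)² / (u (u + 2a)) = (1 - (a / (u + a))²)⁻¹`,
so `R = -log₂ w` with `w = 1 - (a / (u + a))²`. Since `v ↦ v⁻²` is convex on `(0, ∞)` and `u` is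
affine in `γ`, `w` is concave in `γ`; composing with the convex decreasing function `-log₂` gives
convexity.
-/

open Real Set

theorem ConvexOn.comp_concaveOn_of_mapsTo {𝕜 E β γ : Type*} [Semiring 𝕜] [PartialOrder 𝕜]
    [AddCommMonoid E] [AddCommMonoid β] [PartialOrder β] [AddCommMonoid γ] [PartialOrder γ]
    [SMul 𝕜 E] [SMul 𝕜 β] [SMul 𝕜 γ] {s : Set E} {t : Set β} {f : E → β} {g : β → γ}
    (hg : ConvexOn 𝕜 t g) (hg' : AntitoneOn g t) (hf : ConcaveOn 𝕜 s f) (hst : MapsTo f s t) :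
    ConvexOn 𝕜 s (g ∘ f) :=
  ⟨hf.1, fun _ hx _ hy _ _ ha hb hab =>
    (hg' (hg.1 (hst hx) (hst hy) ha hb hab) (hst (hf.1 hx hy ha hb hab))
      (hf.2 hx hy ha hb hab)).trans (hg.2 (hst hx) (hst hy) ha hb hab)⟩

namespace Real

theorem convexOn_neg_logb {b : ℝ} (hb : 1 < b) : ConvexOn ℝ (Ioi 0) fun x => -logb b x := by
  refine (strictConcaveOn_log_Ioi.concaveOn.neg.smul (inv_nonneg.2 (log_nonneg hb.le))).congr ?_
  intro x _
  simp only [logb, smul_eq_mul, Pi.neg_apply]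
  ring

theorem antitoneOn_neg_logb {b : ℝ} (hb : 1 < b) : AntitoneOn (fun x => -logb b x) (Ioi 0) :=
  fun _ hx _ _ hxy => neg_le_neg (logb_le_logb_of_le hb hx hxy)

end Real

theorem convexOn_sq_div_add_mul (a : ℝ) {c d : ℝ} (hc : 0 < c) (hd : 0 ≤ d) :
    ConvexOn ℝ (Ici 0) fun x => (a / (c + x * d)) ^ 2 := by
  have hpos : ∀ x ∈ Ici (0 : ℝ), 0 < c + x * d := fun x hx =>
    add_pos_of_pos_of_nonneg hc (mul_nonneg hx hd)
  have hzpow := ((convexOn_zpow (-2)).comp_affineMap (AffineMap.lineMap c (c + d))).smul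
    (sq_nonneg a)
  refine (hzpow.subset (fun x hx => ?_) (convex_Ici 0)).congr fun x hx => ?_
  · simpa [AffineMap.lineMap_apply_ring', add_comm] using hpos x hx
  · simp only [Function.comp_apply, AffineMap.lineMap_apply_ring', add_sub_cancel_left,
      smul_eq_mul, div_pow, zpow_neg, zpow_ofNat]
    ring

theorem one_add_div_eq_inv_one_sub_sq {a u : ℝ} (ha : 0 < a) (hu : 0 < u) :
    1 + a / (2 * u + u ^ 2 / a) = (1 - (a / (u + a)) ^ 2)⁻¹ := by
  have h : 1 - (a / (u + a)) ^ 2 = u * (u + 2 * a) / (u + a) ^ 2 := by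
    field_simp
    ring
  rw [h, inv_div]
  field_simp
  ring

theorem skg_rate_convexOn_in_jamming_power_general
    (σ σJ p : ℝ) (hσ : 0 < σ) (hp : 0 < p) :
    ConvexOn ℝ (Set.Ici 0)
      (fun γ : ℝ => Real.logb 2
        (1 + p * σ ^ 2 / (2 * (1 + γ * σJ ^ 2) + (1 + γ * σJ ^ 2) ^ 2 / (p * σ ^ 2)))) := by
  set a := p * σ ^ 2
  have ha : 0 < a := by positivity
  have hw : ConcaveOn ℝ (Ici 0) fun γ => 1 - (a / (1 + a + γ * σJ ^ 2)) ^ 2 := by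
    refine ((convexOn_sq_div_add_mul a (c := 1 + a) (by positivity) (sq_nonneg σJ)).neg.add_const
      1).congr fun γ _ => ?_
    simp only [Pi.add_apply, Pi.neg_apply]
    ring
  have hw_pos : MapsTo (fun γ => 1 - (a / (1 + a + γ * σJ ^ 2)) ^ 2) (Ici 0) (Ioi 0) := by
    intro γ (hγ : 0 ≤ γ)
    have hlt : a < 1 + a + γ * σJ ^ 2 := by nlinarith [sq_nonneg σJ]
    exact sub_pos.2 (pow_lt_one₀ (by positivity) ((div_lt_one (by linarith)).2 hlt) two_ne_zero)
  refine ((convexOn_neg_logb one_lt_two).comp_concaveOn_of_mapsTo (antitoneOn_neg_logb one_lt_two)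
    hw hw_pos).congr fun γ (hγ : 0 ≤ γ) => ?_
  have hu : 0 < 1 + γ * σJ ^ 2 := by positivity
  simp only [Function.comp_apply]
  rw [one_add_div_eq_inv_one_sub_sq ha hu, logb_inv, add_right_comm]

/-- The per-subcarrier W-SKG rate `R(p, γ)` of equation (17) is convex in the jamming
power `γ` on `[0, ∞)`, for fixed pilot power `p > 0` (key ingredient of Lemma 2). -/
theorem skg_rate_convexOn_in_jamming_power
    (σ σJ p : ℝ) (hσ : 0 < σ) (hσJ : 0 < σJ) (hp : 0 < p) :
    ConvexOn ℝ (Set.Ici 0)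
      (fun γ : ℝ => Real.logb 2
        (1 + p * σ ^ 2 / (2 * (1 + γ * σJ ^ 2) + (1 + γ * σJ ^ 2) ^ 2 / (p * σ ^ 2)))) :=
  skg_rate_convexOn_in_jamming_power_general σ σJ p hσ hp
end

section
/- Fix σ > 0, σ_J > 0, p > 0, Γ > 0 and a positive integer N, and define R(p, γ) = log₂(1 + p·σ²/(2·(1 + γ·σ_J²) + (1 + γ·σ_J²)²/(p·σ²))) for γ ≥ 0. Then for every vector (γ₁, …, γ_N) with γᵢ ≥ 0 for all i and ∑_{i=1}^N γᵢ ≤ N·Γ, one has N·R(p, Γ) ≤ ∑_{i=1}^N R(p, γᵢ). Consequently the uniform allocation γᵢ = Γ for all i minimizes the secret-key sum rate ∑_{i=1}^N R(p, γᵢ) over the jammer's feasible set. -/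
/-!
Writing `a = p σ²` and `u = 1 + γ σ_J²`, the argument of the logarithm in `R` simplifies to
`(u + a)² / (u (u + 2a))`, so `R` is, up to the factor `1 / log 2`, the function
`F(u) = 2 log (u + a) - log u - log (u + 2a)`, with `F'(u) = -2a² / (u (u + a) (u + 2a))`.
This derivative is nonpositive and increasing on `u > 0`, so `F` is antitone and convex there.
Jensen's inequality bounds the sum rate from below by `N F(ū)` at the mean `ū` of the `uᵢ`,
and the power budget gives `ū ≤ 1 + Γ σ_J²`, where `F` is smaller still.
-/

open Real Set

section Jensen

open Finset

theorem ConvexOn.card_mul_le_sum_of_antitoneOn {ι : Type*} {s : Set ℝ} {f : ℝ → ℝ}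
    (hf : ConvexOn ℝ s f) (hf_anti : AntitoneOn f s) {t : Finset ι} (ht : t.Nonempty)
    {x : ι → ℝ} (hx : ∀ i ∈ t, x i ∈ s) {y : ℝ} (hy : y ∈ s) (hsum : ∑ i ∈ t, x i ≤ #t * y) :
    #t * f y ≤ ∑ i ∈ t, f (x i) := by
  have hcard : (0 : ℝ) < #t := by exact_mod_cast ht.card_pos
  have hw₀ : ∀ i ∈ t, 0 ≤ (#t : ℝ)⁻¹ := fun _ _ => by positivity
  have hw₁ : ∑ _i ∈ t, (#t : ℝ)⁻¹ = 1 := by simp [hcard.ne']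
  have hmean : ∑ i ∈ t, (#t : ℝ)⁻¹ • x i ∈ s := hf.1.sum_mem hw₀ hw₁ hx
  have hmean_le : ∑ i ∈ t, (#t : ℝ)⁻¹ • x i ≤ y := by
    rw [← Finset.smul_sum, smul_eq_mul, inv_mul_le_iff₀ hcard]
    exact hsum
  calc #t * f y ≤ #t * f (∑ i ∈ t, (#t : ℝ)⁻¹ • x i) := by
        gcongr; exact hf_anti hmean hy hmean_le
    _ ≤ #t * ∑ i ∈ t, (#t : ℝ)⁻¹ • f (x i) := by
        gcongr; exact hf.map_sum_le hw₀ hw₁ hx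
    _ = ∑ i ∈ t, f (x i) := by
        rw [← Finset.smul_sum, smul_eq_mul, mul_inv_cancel_left₀ hcard.ne']

end Jensen

/-- The rate `R` in nats, in terms of `a = p σ²` and `u = 1 + γ σ_J²`. -/
noncomputable def skgRateNats (a u : ℝ) : ℝ := 2 * log (u + a) - log u - log (u + 2 * a)

theorem logb_eq_skgRateNats_div_log_two {a u : ℝ} (ha : 0 ≤ a) (hu : 0 < u) :
    logb 2 (1 + a / (2 * u + u ^ 2 / a)) = skgRateNats a u / log 2 := by
  have harg : 1 + a / (2 * u + u ^ 2 / a) = (u + a) ^ 2 / (u * (u + 2 * a)) := by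
    -- at `a = 0` both sides are `1`, the left one through `u ^ 2 / 0 = 0`
    rcases ha.eq_or_lt with rfl | ha
    · field_simp
      ring
    · field_simp
      ring
  rw [harg, logb, log_div (by positivity) (by positivity), log_mul (by positivity) (by positivity),
    log_pow, skgRateNats]
  push_cast
  ring

theorem hasDerivAt_skgRateNats {a u : ℝ} (ha : 0 ≤ a) (hu : 0 < u) :
    HasDerivAt (skgRateNats a) (-(2 * a ^ 2) / (u * (u + a) * (u + 2 * a))) u := by
  have h₁ : HasDerivAt (fun v => log (v + a)) (1 / (u + a)) u := by
    simpa using ((hasDerivAt_id u).add_const a).log (by positivity)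
  have h₂ : HasDerivAt (fun v => log (v + 2 * a)) (1 / (u + 2 * a)) u := by
    simpa using ((hasDerivAt_id u).add_const (2 * a)).log (by positivity)
  refine (((h₁.const_mul 2).sub (hasDerivAt_log hu.ne')).sub h₂).congr_deriv ?_
  field_simp
  ring

theorem continuousOn_skgRateNats {a : ℝ} (ha : 0 ≤ a) : ContinuousOn (skgRateNats a) (Ioi 0) :=
  fun _ hu => (hasDerivAt_skgRateNats ha hu).continuousAt.continuousWithinAt

theorem differentiableOn_skgRateNats {a : ℝ} (ha : 0 ≤ a) :
    DifferentiableOn ℝ (skgRateNats a) (Ioi 0) :=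
  fun _ hu => (hasDerivAt_skgRateNats ha hu).differentiableAt.differentiableWithinAt

theorem antitoneOn_skgRateNats {a : ℝ} (ha : 0 ≤ a) : AntitoneOn (skgRateNats a) (Ioi 0) := by
  refine antitoneOn_of_deriv_nonpos (convex_Ioi 0) (continuousOn_skgRateNats ha)
    (by simpa using differentiableOn_skgRateNats ha) fun u hu => ?_
  rw [interior_Ioi, mem_Ioi] at hu
  rw [(hasDerivAt_skgRateNats ha hu).deriv, neg_div, neg_nonpos]
  positivity

theorem convexOn_skgRateNats {a : ℝ} (ha : 0 ≤ a) : ConvexOn ℝ (Ioi 0) (skgRateNats a) := by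
  refine MonotoneOn.convexOn_of_deriv (convex_Ioi 0) (continuousOn_skgRateNats ha)
    (by simpa using differentiableOn_skgRateNats ha) fun u hu v hv huv => ?_
  rw [interior_Ioi, mem_Ioi] at hu hv
  rw [(hasDerivAt_skgRateNats ha hu).deriv, (hasDerivAt_skgRateNats ha hv).deriv, neg_div,
    neg_div, neg_le_neg_iff]
  gcongr

theorem uniform_jamming_minimizes_skg_sum_rate_general
    (σ σJ p Γ : ℝ) (hp : 0 < p)
    (N : ℕ) (hN : 0 < N)
    (R : ℝ → ℝ → ℝ)
    (hR : ∀ q γ, R q γ = Real.logb 2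
      (1 + q * σ ^ 2 / (2 * (1 + γ * σJ ^ 2) + (1 + γ * σJ ^ 2) ^ 2 / (q * σ ^ 2))))
    (γ : Fin N → ℝ) (hγ : ∀ i, 0 ≤ γ i) (hsum : ∑ i, γ i ≤ N * Γ) :
    (N : ℝ) * R p Γ ≤ ∑ i, R p (γ i) := by
  have ha : 0 ≤ p * σ ^ 2 := by positivity
  have hΓ : 0 ≤ Γ :=
    nonneg_of_mul_nonneg_right ((Finset.sum_nonneg fun i _ => hγ i).trans hsum)
      (by exact_mod_cast hN)
  have hu : ∀ x, 0 ≤ x → 0 < 1 + x * σJ ^ 2 := fun x hx => by positivity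
  have hR_nats : ∀ x, 0 ≤ x → R p x = skgRateNats (p * σ ^ 2) (1 + x * σJ ^ 2) / log 2 :=
    fun x hx => (hR p x).trans (logb_eq_skgRateNats_div_log_two ha (hu x hx))
  have hsum_u : ∑ i, (1 + γ i * σJ ^ 2) ≤ N * (1 + Γ * σJ ^ 2) := by
    rw [Finset.sum_add_distrib, ← Finset.sum_mul]
    simp only [Finset.sum_const, Finset.card_univ, Fintype.card_fin, nsmul_eq_mul, mul_one]
    nlinarith [sq_nonneg σJ]
  have hjensen := (convexOn_skgRateNats ha).card_mul_le_sum_of_antitoneOn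
    (antitoneOn_skgRateNats ha) (Finset.univ_nonempty_iff.mpr ⟨⟨0, hN⟩⟩)
    (fun i _ => hu (γ i) (hγ i)) (hu Γ hΓ) (by simpa using hsum_u)
  rw [Finset.card_univ, Fintype.card_fin] at hjensen
  rw [hR_nats Γ hΓ, Finset.sum_congr rfl fun i _ => hR_nats (γ i) (hγ i), ← Finset.sum_div,
    ← mul_div_assoc]
  exact div_le_div_of_nonneg_right hjensen (log_pos one_lt_two).le

/-- Lemma 2 of the paper: for any feasible jamming power allocation `γ : Fin N → ℝ`
(nonnegative entries summing to at most `N·Γ`), the uniform allocation `(Γ, …, Γ)`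
minimizes the secret-key sum rate, i.e. `N·R(p, Γ) ≤ ∑ᵢ R(p, γᵢ)`. -/
theorem uniform_jamming_minimizes_skg_sum_rate
    (σ σJ p Γ : ℝ) (hσ : 0 < σ) (hσJ : 0 < σJ) (hp : 0 < p) (hΓ : 0 < Γ)
    (N : ℕ) (hN : 0 < N)
    (R : ℝ → ℝ → ℝ)
    (hR : ∀ q γ, R q γ = Real.logb 2
      (1 + q * σ ^ 2 / (2 * (1 + γ * σJ ^ 2) + (1 + γ * σJ ^ 2) ^ 2 / (q * σ ^ 2))))
    (γ : Fin N → ℝ) (hγ : ∀ i, 0 ≤ γ i) (hsum : ∑ i, γ i ≤ N * Γ) :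
    (N : ℝ) * R p Γ ≤ ∑ i, R p (γ i) :=
  uniform_jamming_minimizes_skg_sum_rate_general σ σJ p Γ hp N hN R hR γ hγ hsum
end

section
/- Fix σ > 0, σ_J > 0, p > 0, Γ > 0 and a positive integer N, and define R(p, γ) = log₂(1 + p·σ²/(2·(1 + γ·σ_J²) + (1 + γ·σ_J²)²/(p·σ²))) for γ ≥ 0. Then the infimum of ∑_{i=1}^N R(p, γᵢ) over all (γ₁, …, γ_N) with γᵢ ≥ 0 and ∑_{i=1}^N γᵢ ≤ N·Γ equals N·R(p, Γ), and this infimum is attained at the uniform point (Γ, …, Γ). -/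
/-!
Writing `a = p σ²` and `u = 1 + γ σ_J²` for the effective noise level, the rate is
`log₂ ((u + a)² / (u (u + 2a)))`, a convex decreasing function of `u`, hence of `γ`.
Its tangent line at `Γ` has nonpositive slope `C` and lies below it, so
`∑ R(p, γᵢ) ≥ N R(p, Γ) + C (∑ γᵢ - N Γ) ≥ N R(p, Γ)` whenever `∑ γᵢ ≤ N Γ`.
-/

open Real Finset

theorem card_mul_le_sum_of_supporting_line {ι : Type*} [Fintype ι] {f : ℝ → ℝ} {x₀ C : ℝ}
    {x : ι → ℝ} (hC : C ≤ 0) (hf : ∀ i, f x₀ + C * (x i - x₀) ≤ f (x i))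
    (hx : ∑ i, x i ≤ Fintype.card ι * x₀) :
    Fintype.card ι * f x₀ ≤ ∑ i, f (x i) := by
  have hline : ∑ i, (f x₀ + C * (x i - x₀)) =
      Fintype.card ι * f x₀ + C * (∑ i, x i - Fintype.card ι * x₀) := by
    simp only [sum_add_distrib, ← mul_sum, sum_sub_distrib, sum_const, card_univ, nsmul_eq_mul]
  calc (Fintype.card ι : ℝ) * f x₀
      ≤ Fintype.card ι * f x₀ + C * (∑ i, x i - Fintype.card ι * x₀) :=
        le_add_of_nonneg_right (mul_nonneg_of_nonpos_of_nonpos hC (by linarith))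
    _ = ∑ i, (f x₀ + C * (x i - x₀)) := hline.symm
    _ ≤ ∑ i, f (x i) := sum_le_sum fun i _ => hf i

theorem one_add_div_two_mul_add_sq_div {a u : ℝ} (ha : 0 ≤ a) (hu : 0 < u) :
    1 + a / (2 * u + u ^ 2 / a) = (u + a) ^ 2 / (u * (u + 2 * a)) := by
  rcases ha.eq_or_lt with rfl | ha
  · simp [← sq, hu.ne']
  · field_simp
    ring

theorem log_sq_add_div_tangent {a u v : ℝ} (ha : 0 ≤ a) (hu : 0 < u) (hv : 0 < v) :
    log ((v + a) ^ 2 / (v * (v + 2 * a))) - 2 * a ^ 2 / (v * (v + a) * (v + 2 * a)) * (u - v)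
      ≤ log ((u + a) ^ 2 / (u * (u + 2 * a))) := by
  set A := (u + a) ^ 2 / (u * (u + 2 * a))
  set B := (v + a) ^ 2 / (v * (v + 2 * a))
  -- minus the derivative of `log A` in `u` at `u = v`
  set s := 2 * a ^ 2 / (v * (v + a) * (v + 2 * a))
  have hA : 0 < A := by positivity
  have hB : 0 < B := by positivity
  have hgap : 1 - B / A + s * (u - v) =
      a ^ 2 * (u - v) ^ 2 * (3 * a + 2 * u + v) / (v * (v + 2 * a) * (u + a) ^ 2 * (v + a)) := by
    simp only [A, B, s]
    field_simp
    ring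
  have hratio : B / A - 1 ≤ s * (u - v) := by
    have : 0 ≤ a ^ 2 * (u - v) ^ 2 * (3 * a + 2 * u + v) /
        (v * (v + 2 * a) * (u + a) ^ 2 * (v + a)) := by positivity
    linarith
  calc log B - s * (u - v) = log A + log (B / A) - s * (u - v) := by
        rw [log_div hB.ne' hA.ne']; ring
    _ ≤ log A + (B / A - 1) - s * (u - v) := by
        gcongr; exact log_le_sub_one_of_pos (div_pos hB hA)
    _ ≤ log A := by linarith

noncomputable def skgRate (σ σJ q γ : ℝ) : ℝ :=
  logb 2 (1 + q * σ ^ 2 / (2 * (1 + γ * σJ ^ 2) + (1 + γ * σJ ^ 2) ^ 2 / (q * σ ^ 2)))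

theorem skgRate_eq_logb {σ σJ q γ : ℝ} (hq : 0 ≤ q) (hγ : 0 ≤ γ) :
    skgRate σ σJ q γ = logb 2 (((1 + γ * σJ ^ 2) + q * σ ^ 2) ^ 2 /
      ((1 + γ * σJ ^ 2) * ((1 + γ * σJ ^ 2) + 2 * (q * σ ^ 2)))) := by
  rw [skgRate, one_add_div_two_mul_add_sq_div (by positivity) (by positivity)]

theorem exists_skgRate_supporting_line (σ σJ : ℝ) {p Γ : ℝ} (hp : 0 ≤ p) (hΓ : 0 ≤ Γ) :
    ∃ C ≤ 0, ∀ γ, 0 ≤ γ → skgRate σ σJ p Γ + C * (γ - Γ) ≤ skgRate σ σJ p γ := by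
  set a := p * σ ^ 2
  set v := 1 + Γ * σJ ^ 2
  set s := 2 * a ^ 2 / (v * (v + a) * (v + 2 * a))
  have hlog2 : 0 < log 2 := log_pos one_lt_two
  refine ⟨-(s * σJ ^ 2) / log 2, div_nonpos_of_nonpos_of_nonneg
    (neg_nonpos.2 (by positivity)) hlog2.le, fun γ hγ => ?_⟩
  have htangent := log_sq_add_div_tangent (a := a) (u := 1 + γ * σJ ^ 2) (v := v)
    (by positivity) (by positivity) (by positivity)
  have hshift : s * σJ ^ 2 * (γ - Γ) = s * (1 + γ * σJ ^ 2 - v) := by ring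
  rw [skgRate_eq_logb hp hΓ, skgRate_eq_logb hp hγ, logb, logb, neg_div, neg_mul,
    ← sub_eq_add_neg, div_mul_eq_mul_div, ← sub_div, hshift]
  exact div_le_div_of_nonneg_right htangent hlog2.le

theorem uniform_jamming_isLeast_skg_sum_rate_general
    (σ σJ p Γ : ℝ) (hp : 0 < p) (hΓ : 0 < Γ)
    (N : ℕ)
    (R : ℝ → ℝ → ℝ)
    (hR : ∀ q γ, R q γ = Real.logb 2
      (1 + q * σ ^ 2 / (2 * (1 + γ * σJ ^ 2) + (1 + γ * σJ ^ 2) ^ 2 / (q * σ ^ 2)))) :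
    IsLeast {x : ℝ | ∃ γ : Fin N → ℝ,
        (∀ i, 0 ≤ γ i) ∧ (∑ i, γ i ≤ N * Γ) ∧ x = ∑ i, R p (γ i)}
      ((N : ℝ) * R p Γ) ∧
    ((N : ℝ) * R p Γ = ∑ _i : Fin N, R p Γ) := by
  obtain rfl : R = skgRate σ σJ := funext₂ hR
  have huniform : (N : ℝ) * skgRate σ σJ p Γ = ∑ _i : Fin N, skgRate σ σJ p Γ := by simp
  refine ⟨⟨⟨fun _ => Γ, fun _ => hΓ.le, by simp, huniform⟩, ?_⟩, huniform⟩
  rintro x ⟨γ, hγ, hsum, rfl⟩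
  obtain ⟨C, hC, hline⟩ := exists_skgRate_supporting_line σ σJ hp.le hΓ.le
  simpa using card_mul_le_sum_of_supporting_line hC (fun i => hline (γ i) (hγ i))
    (by simpa using hsum)

/-- The attained-minimum formulation of Lemma 2 and of the jammer's best response (19):
the infimum of the secret-key sum rate `∑ᵢ R(p, γᵢ)` over feasible jamming allocations
(nonnegative, summing to at most `N·Γ`) equals `N·R(p, Γ)`, attained at the uniform
point `(Γ, …, Γ)`. -/
theorem uniform_jamming_isLeast_skg_sum_rate
    (σ σJ p Γ : ℝ) (hσ : 0 < σ) (hσJ : 0 < σJ) (hp : 0 < p) (hΓ : 0 < Γ)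
    (N : ℕ) (hN : 0 < N)
    (R : ℝ → ℝ → ℝ)
    (hR : ∀ q γ, R q γ = Real.logb 2
      (1 + q * σ ^ 2 / (2 * (1 + γ * σJ ^ 2) + (1 + γ * σJ ^ 2) ^ 2 / (q * σ ^ 2)))) :
    IsLeast {x : ℝ | ∃ γ : Fin N → ℝ,
        (∀ i, 0 ≤ γ i) ∧ (∑ i, γ i ≤ N * Γ) ∧ x = ∑ i, R p (γ i)}
      ((N : ℝ) * R p Γ) ∧
    ((N : ℝ) * R p Γ = ∑ _i : Fin N, R p Γ) :=
  uniform_jamming_isLeast_skg_sum_rate_general σ σJ p Γ hp hΓ N R hR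
end

section
/- Fix σ > 0, σ_J > 0, Γ > 0, p_th > 0 and P > 0, and define R(p, γ) = log₂(1 + p·σ²/(2·(1 + γ·σ_J²) + (1 + γ·σ_J²)²/(p·σ²))) for p > 0, γ ≥ 0. Then R(P, Γ) > R(p_th, 0) if and only if P > p_th·(σ_J²·Γ + 1), and R(P, Γ) < R(p_th, 0) if and only if P < p_th·(σ_J²·Γ + 1). -/
/-!
Dividing numerator and denominator by `a = 1 + γ σ_J²` shows that `R(p, γ)` depends only on the
signal-to-interference-plus-noise ratio `s = p σ² / a`, as `log₂ (1 + s² / (2 s + 1))`, which is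
strictly increasing in `s ≥ 0`. Comparing the two rates thus amounts to comparing `p_th σ²` with
`P σ² / (1 + Γ σ_J²)`.
-/

open Real Set

noncomputable def skgRateOfSINR (s : ℝ) : ℝ := logb 2 (1 + s ^ 2 / (2 * s + 1))

theorem strictMonoOn_sq_div_two_mul_add_one :
    StrictMonoOn (fun u : ℝ => u ^ 2 / (2 * u + 1)) (Ici 0) := by
  intro u (hu : 0 ≤ u) v (hv : 0 ≤ v) huv
  rw [div_lt_div_iff₀ (by linarith) (by linarith)]
  -- `v² (2u + 1) - u² (2v + 1) = (v - u) (2uv + u + v)`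
  nlinarith [mul_nonneg hu hv]

theorem strictMonoOn_skgRateOfSINR : StrictMonoOn skgRateOfSINR (Ici 0) := by
  intro u hu v hv huv
  have hpos : ∀ s ∈ Ici (0 : ℝ), 0 < 1 + s ^ 2 / (2 * s + 1) := fun s (hs : 0 ≤ s) => by
    positivity
  rw [skgRateOfSINR, skgRateOfSINR, logb_lt_logb_iff one_lt_two (hpos u hu) (hpos v hv),
    add_lt_add_iff_left]
  exact strictMonoOn_sq_div_two_mul_add_one hu hv huv

theorem div_two_mul_add_sq_div_eq {x a : ℝ} (hx : x ≠ 0) (ha : a ≠ 0) :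
    x / (2 * a + a ^ 2 / x) = (x / a) ^ 2 / (2 * (x / a) + 1) := by
  field_simp

theorem mul_div_lt_mul_div_iff {c a b : ℝ} (hc : 0 < c) (ha : 0 < a) (hb : 0 < b) (p q : ℝ) :
    p * c / a < q * c / b ↔ p * b < q * a := by
  rw [div_lt_div_iff₀ ha hb, mul_right_comm, mul_right_comm q, mul_lt_mul_iff_left₀ hc]

theorem skg_rate_comparison_criterion_general
    (σ σJ Γ pth P : ℝ) (hσ : 0 < σ) (hΓ : 0 < Γ) (hpth : 0 < pth)
    (hP : 0 < P)
    (R : ℝ → ℝ → ℝ)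
    (hR : ∀ p γ, R p γ = Real.logb 2
      (1 + p * σ ^ 2 / (2 * (1 + γ * σJ ^ 2) + (1 + γ * σJ ^ 2) ^ 2 / (p * σ ^ 2)))) :
    (R pth 0 < R P Γ ↔ pth * (σJ ^ 2 * Γ + 1) < P) ∧
    (R P Γ < R pth 0 ↔ P < pth * (σJ ^ 2 * Γ + 1)) := by
  have hR_sinr : ∀ p γ, 0 < p → 0 ≤ γ →
      R p γ = skgRateOfSINR (p * σ ^ 2 / (1 + γ * σJ ^ 2)) := fun p γ hp hγ => by
    rw [hR, div_two_mul_add_sq_div_eq (by positivity) (by positivity), skgRateOfSINR]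
  have hσ2 : 0 < σ ^ 2 := by positivity
  have hJ : 0 < 1 + Γ * σJ ^ 2 := by positivity
  have hmem : ∀ p γ, 0 < p → 0 ≤ γ → p * σ ^ 2 / (1 + γ * σJ ^ 2) ∈ Ici 0 :=
    fun p γ hp hγ => mem_Ici.mpr (by positivity)
  rw [hR_sinr P Γ hP hΓ.le, hR_sinr pth 0 hpth le_rfl,
    strictMonoOn_skgRateOfSINR.lt_iff_lt (hmem _ _ hpth le_rfl) (hmem _ _ hP hΓ.le),
    strictMonoOn_skgRateOfSINR.lt_iff_lt (hmem _ _ hP hΓ.le) (hmem _ _ hpth le_rfl),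
    mul_div_lt_mul_div_iff hσ2 (by norm_num) hJ, mul_div_lt_mul_div_iff hσ2 hJ (by norm_num),
    zero_mul, add_zero, mul_one, add_comm 1, mul_comm Γ]
  exact ⟨Iff.rfl, Iff.rfl⟩

/-- The comparison criterion in the proof of Theorem 1: `R(P, Γ) > R(p_th, 0)` iff
`P > p_th·(σ_J²·Γ + 1)`, and `R(P, Γ) < R(p_th, 0)` iff `P < p_th·(σ_J²·Γ + 1)`. -/
theorem skg_rate_comparison_criterion
    (σ σJ Γ pth P : ℝ) (hσ : 0 < σ) (hσJ : 0 < σJ) (hΓ : 0 < Γ) (hpth : 0 < pth)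
    (hP : 0 < P)
    (R : ℝ → ℝ → ℝ)
    (hR : ∀ p γ, R p γ = Real.logb 2
      (1 + p * σ ^ 2 / (2 * (1 + γ * σJ ^ 2) + (1 + γ * σJ ^ 2) ^ 2 / (p * σ ^ 2)))) :
    (R pth 0 < R P Γ ↔ pth * (σJ ^ 2 * Γ + 1) < P) ∧
    (R P Γ < R pth 0 ↔ P < pth * (σJ ^ 2 * Γ + 1)) :=
  skg_rate_comparison_criterion_general σ σJ Γ pth P hσ hΓ hpth hP R hR
end

section
/- Fix σ > 0, σ_J > 0, Γ > 0, p_th > 0 and P > p_th, with P > p_th·(σ_J²·Γ + 1). Define R(p, γ) = log₂(1 + p·σ²/(2·(1 + γ·σ_J²) + (1 + γ·σ_J²)²/(p·σ²))) for p > 0, γ ≥ 0, and the leader payoff f(p) = R(p, 0) if 0 < p ≤ p_th and f(p) = R(p, Γ) if p_th < p ≤ P. Then f attains its maximum over (0, P] uniquely at p = P, i.e., f(p) < f(P) for all p ∈ (0, P] with p ≠ P. -/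
/-!
In terms of the effective SNR `x = p σ² / (1 + γ σ_J²)` the rate is `log₂ (1 + x² / (2x + 1))`,
strictly increasing in `x ≥ 0`. Jamming only divides the SNR by `1 + Γ σ_J²`, and
`P > p_th (σ_J² Γ + 1)` makes the jammed SNR at full power exceed every unjammed SNR at
`p ≤ p_th`; above the threshold the SNR simply grows with `p`.
-/

open Real Set

noncomputable def snrRate (x : ℝ) : ℝ :=
  logb 2 (1 + x ^ 2 / (2 * x + 1))

lemma sq_div_two_mul_add_one_strictMonoOn :
    StrictMonoOn (fun x : ℝ => x ^ 2 / (2 * x + 1)) (Ici 0) := by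
  intro a (ha : 0 ≤ a) b _ hab
  have hb : 0 < b := ha.trans_lt hab
  rw [div_lt_div_iff₀ (by positivity) (by positivity)]
  nlinarith [mul_pos (sub_pos.mpr hab) (by positivity : 0 < 2 * a * b + a + b)]

lemma snrRate_strictMonoOn : StrictMonoOn snrRate (Ici 0) := by
  intro a (ha : 0 ≤ a) b hb hab
  exact logb_lt_logb one_lt_two (by positivity)
    (by linarith [sq_div_two_mul_add_one_strictMonoOn ha hb hab])

lemma logb_one_add_div_eq_snrRate {a c : ℝ} (ha : 0 < a) (hc : 0 < c) :
    logb 2 (1 + a / (2 * c + c ^ 2 / a)) = snrRate (a / c) := by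
  have : 0 < 2 * c + c ^ 2 / a := by positivity
  have : 0 < 2 * (a / c) + 1 := by positivity
  rw [snrRate]
  field_simp

theorem stackelberg_full_power_optimal_general
    (σ σJ Γ pth P : ℝ) (hσ : 0 < σ) (hΓ : 0 < Γ)
    (hPpth : pth < P) (hcrit : pth * (σJ ^ 2 * Γ + 1) < P)
    (R : ℝ → ℝ → ℝ)
    (hR : ∀ p γ, R p γ = Real.logb 2
      (1 + p * σ ^ 2 / (2 * (1 + γ * σJ ^ 2) + (1 + γ * σJ ^ 2) ^ 2 / (p * σ ^ 2))))
    (f : ℝ → ℝ) (hf : ∀ p, f p = if p ≤ pth then R p 0 else R p Γ) :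
    ∀ p ∈ Set.Ioc (0 : ℝ) P, p ≠ P → f p < f P := by
  rintro p ⟨hp, hpP⟩ hpne
  have hs : 0 < σ ^ 2 := by positivity
  have hc : 0 < 1 + Γ * σJ ^ 2 := by positivity
  have hP : 0 < P := hp.trans_le hpP
  have hR_eq : ∀ q γ, 0 < q → 0 < 1 + γ * σJ ^ 2 →
      R q γ = snrRate (q * σ ^ 2 / (1 + γ * σJ ^ 2)) := fun q γ hq hγ => by
    rw [hR, logb_one_add_div_eq_snrRate (by positivity) hγ]
  have hfP : f P = snrRate (P * σ ^ 2 / (1 + Γ * σJ ^ 2)) := by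
    rw [hf, if_neg hPpth.not_ge, hR_eq P Γ hP hc]
  rw [hfP, hf]
  split_ifs with hpth
  · rw [hR_eq p 0 hp (by simp)]
    refine snrRate_strictMonoOn (by positivity : (0 : ℝ) ≤ _) (by positivity : (0 : ℝ) ≤ _) ?_
    rw [zero_mul, add_zero, div_one, lt_div_iff₀ hc]
    nlinarith [mul_le_mul_of_nonneg_right hpth hc.le]
  · rw [hR_eq p Γ hp hc]
    refine snrRate_strictMonoOn (by positivity : (0 : ℝ) ≤ _) (by positivity : (0 : ℝ) ≤ _) ?_
    gcongr
    exact hpP.lt_of_ne hpne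

/-- The case `P > p_th(σ_J²Γ + 1)` of Theorem 1: against the best-responding reactive
jammer (silent below threshold, uniform jamming `Γ` above), the leader payoff
`f(p) = R(p,0)` for `p ≤ p_th` and `f(p) = R(p,Γ)` for `p > p_th` attains its maximum
over `(0, P]` uniquely at full power `p = P`. -/
theorem stackelberg_full_power_optimal
    (σ σJ Γ pth P : ℝ) (hσ : 0 < σ) (hσJ : 0 < σJ) (hΓ : 0 < Γ) (hpth : 0 < pth)
    (hPpth : pth < P) (hcrit : pth * (σJ ^ 2 * Γ + 1) < P)
    (R : ℝ → ℝ → ℝ)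
    (hR : ∀ p γ, R p γ = Real.logb 2
      (1 + p * σ ^ 2 / (2 * (1 + γ * σJ ^ 2) + (1 + γ * σJ ^ 2) ^ 2 / (p * σ ^ 2))))
    (f : ℝ → ℝ) (hf : ∀ p, f p = if p ≤ pth then R p 0 else R p Γ) :
    ∀ p ∈ Set.Ioc (0 : ℝ) P, p ≠ P → f p < f P :=
  stackelberg_full_power_optimal_general σ σJ Γ pth P hσ hΓ hPpth hcrit R hR f hf
end

section
/- Fix σ > 0, σ_J > 0, Γ > 0, p_th > 0 and P > p_th, with P < p_th·(σ_J²·Γ + 1). Define R(p, γ) = log₂(1 + p·σ²/(2·(1 + γ·σ_J²) + (1 + γ·σ_J²)²/(p·σ²))) for p > 0, γ ≥ 0, and the leader payoff f(p) = R(p, 0) if 0 < p ≤ p_th and f(p) = R(p, Γ) if p_th < p ≤ P. Then f attains its maximum over (0, P] uniquely at p = p_th, i.e., f(p) < f(p_th) for all p ∈ (0, P] with p ≠ p_th. -/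
/-!
Dividing numerator and denominator by `c = 1 + γσ_J²` writes `R(p, γ)` as
`log₂(1 + t²/(2t + 1))` in the effective SNR `t = pσ²/c`, and this is strictly increasing
in `t ≥ 0`. Below the threshold `t = pσ² < p_thσ²`; above it
`t = pσ²/(1 + Γσ_J²) ≤ Pσ²/(1 + Γσ_J²) < p_thσ²` by the hypothesis on `P`. So every other
power gives a smaller effective SNR than `p_th`.
-/

open Real Set

noncomputable def secretKeyRate (t : ℝ) : ℝ :=
  logb 2 (1 + t ^ 2 / (2 * t + 1))

lemma strictMonoOn_secretKeyRate : StrictMonoOn secretKeyRate (Ici 0) := by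
  intro a (ha : 0 ≤ a) b _ hab
  have hb : 0 < b := ha.trans_lt hab
  have hfrac : a ^ 2 / (2 * a + 1) < b ^ 2 / (2 * b + 1) := by
    rw [div_lt_div_iff₀ (by positivity) (by positivity)]
    nlinarith [mul_pos (add_pos_of_nonneg_of_pos (by positivity : 0 ≤ 2 * a * b + a) hb)
      (sub_pos.mpr hab)]
  exact logb_lt_logb one_lt_two (by positivity) (by linarith)

lemma logb_one_add_div_eq_secretKeyRate {c x : ℝ} (hc : 0 < c) (hx : 0 < x) :
    logb 2 (1 + x / (2 * c + c ^ 2 / x)) = secretKeyRate (x / c) := by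
  unfold secretKeyRate
  congr 2
  field_simp

theorem stackelberg_threshold_power_optimal_general
    (σ σJ Γ pth P : ℝ) (hσ : 0 < σ) (hΓ : 0 < Γ) (hpth : 0 < pth)
    (hcrit : P < pth * (σJ ^ 2 * Γ + 1))
    (R : ℝ → ℝ → ℝ)
    (hR : ∀ p γ, R p γ = Real.logb 2
      (1 + p * σ ^ 2 / (2 * (1 + γ * σJ ^ 2) + (1 + γ * σJ ^ 2) ^ 2 / (p * σ ^ 2))))
    (f : ℝ → ℝ) (hf : ∀ p, f p = if p ≤ pth then R p 0 else R p Γ) :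
    ∀ p ∈ Set.Ioc (0 : ℝ) P, p ≠ pth → f p < f pth := by
  rintro p ⟨hp, hpP⟩ hne
  have hσ2 : 0 < σ ^ 2 := by positivity
  have hR_eq : ∀ q, 0 < q → ∀ γ, 0 ≤ γ →
      R q γ = secretKeyRate (q * σ ^ 2 / (1 + γ * σJ ^ 2)) := fun q hq γ hγ => by
    rw [hR, logb_one_add_div_eq_secretKeyRate (by positivity) (by positivity)]
  have hf_pth : f pth = secretKeyRate (pth * σ ^ 2) := by
    rw [hf, if_pos le_rfl, hR_eq pth hpth 0 le_rfl]
    simp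
  rw [hf_pth, hf]
  split_ifs with hle
  · rw [hR_eq p hp 0 le_rfl, zero_mul, add_zero, div_one]
    refine strictMonoOn_secretKeyRate (mem_Ici.mpr (by positivity))
      (mem_Ici.mpr (by positivity)) ?_
    exact mul_lt_mul_of_pos_right (lt_of_le_of_ne hle hne) hσ2
  · rw [hR_eq p hp Γ hΓ.le]
    refine strictMonoOn_secretKeyRate (mem_Ici.mpr (by positivity))
      (mem_Ici.mpr (by positivity)) ?_
    rw [div_lt_iff₀ (by positivity)]
    nlinarith [mul_lt_mul_of_pos_right (hpP.trans_lt hcrit) hσ2]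

/-- The case `P < p_th(σ_J²Γ + 1)` of Theorem 1: against the best-responding reactive
jammer (silent below threshold, uniform jamming `Γ` above), the leader payoff
`f(p) = R(p,0)` for `p ≤ p_th` and `f(p) = R(p,Γ)` for `p > p_th` attains its maximum
over `(0, P]` uniquely at the threshold `p = p_th`. -/
theorem stackelberg_threshold_power_optimal
    (σ σJ Γ pth P : ℝ) (hσ : 0 < σ) (hσJ : 0 < σJ) (hΓ : 0 < Γ) (hpth : 0 < pth)
    (hPpth : pth < P) (hcrit : P < pth * (σJ ^ 2 * Γ + 1))
    (R : ℝ → ℝ → ℝ)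
    (hR : ∀ p γ, R p γ = Real.logb 2
      (1 + p * σ ^ 2 / (2 * (1 + γ * σJ ^ 2) + (1 + γ * σJ ^ 2) ^ 2 / (p * σ ^ 2))))
    (f : ℝ → ℝ) (hf : ∀ p, f p = if p ≤ pth then R p 0 else R p Γ) :
    ∀ p ∈ Set.Ioc (0 : ℝ) P, p ≠ pth → f p < f pth :=
  stackelberg_threshold_power_optimal_general σ σJ Γ pth P hσ hΓ hpth hcrit R hR f hf
end

section
/- Fix σ > 0, σ_J > 0, Γ > 0 and p > 0, and define R(p, γ) = log₂(1 + p·σ²/(2·(1 + γ·σ_J²) + (1 + γ·σ_J²)²/(p·σ²))) for γ ≥ 0. Then R(p, Γ) < R(p, 0). Consequently, a jammer who can choose her sensing threshold p_th strategically minimizes the legitimate parties' per-subcarrier secret-key rate by choosing any threshold p_th = ε with 0 ≤ ε < p (so that the transmission is always detected) together with uniform jamming power Γ, achieving the value R(p, Γ), which is strictly smaller than the un-jammed value R(p, 0) obtained with any threshold p_th ≥ p. -/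
open Set

namespace SecretKeyRate

/-- `R(p, γ) = rate (p σ²) (1 + γ σ_J²)`. -/
noncomputable def rate (A u : ℝ) : ℝ :=
  Real.logb 2 (1 + A / (2 * u + u ^ 2 / A))

theorem rate_strictAntiOn {A : ℝ} (hA : 0 < A) : StrictAntiOn (rate A) (Ioi 0) := by
  intro u (hu : 0 < u) v (hv : 0 < v) huv
  have hden : 2 * u + u ^ 2 / A < 2 * v + v ^ 2 / A := by
    have : u ^ 2 / A < v ^ 2 / A := div_lt_div_of_pos_right (by nlinarith) hA
    linarith
  have hsnr : A / (2 * v + v ^ 2 / A) < A / (2 * u + u ^ 2 / A) :=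
    div_lt_div_of_pos_left hA (by positivity) hden
  exact Real.logb_lt_logb one_lt_two (by positivity) (by linarith)

theorem isLeast_threshold_payoffs {p a b : ℝ} (hp : 0 < p) (hab : a ≤ b) :
    IsLeast {x : ℝ | ∃ pth : ℝ, 0 ≤ pth ∧ x = if pth < p then a else b} a := by
  refine ⟨⟨0, le_rfl, (if_pos hp).symm⟩, ?_⟩
  rintro x ⟨pth, -, rfl⟩
  split_ifs
  exacts [le_rfl, hab]

end SecretKeyRate

open SecretKeyRate in
/-- Lemma 3 of the paper: `R(p, Γ) < R(p, 0)`, so a jammer choosing her sensing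
threshold strategically minimizes the legitimate per-subcarrier rate by picking any
threshold `ε` with `0 ≤ ε < p` (the transmission is then detected and jammed with
power `Γ`), achieving the least value `R(p, Γ)` among all thresholds `p_th ≥ 0`,
where a threshold `p_th ≥ p` would leave the un-jammed value `R(p, 0)`. -/
theorem strategic_threshold_best_response
    (σ σJ Γ p : ℝ) (hσ : 0 < σ) (hσJ : 0 < σJ) (hΓ : 0 < Γ) (hp : 0 < p)
    (R : ℝ → ℝ → ℝ)
    (hR : ∀ q γ, R q γ = Real.logb 2
      (1 + q * σ ^ 2 / (2 * (1 + γ * σJ ^ 2) + (1 + γ * σJ ^ 2) ^ 2 / (q * σ ^ 2)))) :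
    R p Γ < R p 0 ∧
    IsLeast {x : ℝ | ∃ pth : ℝ, 0 ≤ pth ∧
        x = (if pth < p then R p Γ else R p 0)} (R p Γ) ∧
    (∀ ε : ℝ, 0 ≤ ε → ε < p → (if ε < p then R p Γ else R p 0) = R p Γ) := by
  have jamming_lowers_rate : R p Γ < R p 0 := by
    rw [hR, hR]
    have hΓσJ : 0 < Γ * σJ ^ 2 := by positivity
    exact rate_strictAntiOn (A := p * σ ^ 2) (by positivity)
      (show (0 : ℝ) < 1 + 0 * σJ ^ 2 by simp) (show (0 : ℝ) < 1 + Γ * σJ ^ 2 by linarith)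
      (by linarith)
  exact ⟨jamming_lowers_rate, isLeast_threshold_payoffs hp jamming_lowers_rate.le,
    fun ε _ hε => if_pos hε⟩
end

section
/- Fix σ > 0, σ_J > 0, Γ > 0 and P > 0, and define R(p, γ) = log₂(1 + p·σ²/(2·(1 + γ·σ_J²) + (1 + γ·σ_J²)²/(p·σ²))) for p > 0, γ ≥ 0. Then the function p ↦ R(p, Γ) attains its maximum over (0, P] uniquely at p = P, i.e., R(p, Γ) < R(P, Γ) for all p ∈ (0, P) ; hence when the reactive jammer chooses her sensing threshold strategically (always below the legitimate power, with uniform jamming at power Γ), the legitimate parties' Stackelberg-optimal pilot power is full power P and the equilibrium per-subcarrier secret-key rate is R(P, Γ). -/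
/-! With `x = p σ²` and `b = 1 + Γ σ_J²`, the argument of the logarithm in `R(p, Γ)` is
`1 + x / (2b + b² / x)`. As `x` grows the numerator increases while the denominator
decreases, so the rate is strictly increasing in the pilot power and full power wins. -/

open Set

lemma strictMonoOn_div_two_mul_add_sq_div {b : ℝ} (hb : 0 < b) :
    StrictMonoOn (fun x => x / (2 * b + b ^ 2 / x)) (Ioi 0) := by
  intro x (hx : 0 < x) y (hy : 0 < y) hxy
  have hden : b ^ 2 / y < b ^ 2 / x := div_lt_div_of_pos_left (by positivity) hx hxy
  exact div_lt_div₀ hxy (by linarith) hy.le (by positivity)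

theorem stackelberg_strategic_threshold_full_power_general
    (σ σJ Γ P : ℝ) (hσ : 0 < σ) (hΓ : 0 < Γ) (hP : 0 < P)
    (R : ℝ → ℝ → ℝ)
    (hR : ∀ p γ, R p γ = Real.logb 2
      (1 + p * σ ^ 2 / (2 * (1 + γ * σJ ^ 2) + (1 + γ * σJ ^ 2) ^ 2 / (p * σ ^ 2)))) :
    ∀ p ∈ Set.Ioo (0 : ℝ) P, R p Γ < R P Γ := by
  rintro p ⟨hp, hpP⟩
  have hb : 0 < 1 + Γ * σJ ^ 2 := by positivity
  have hsnr := strictMonoOn_div_two_mul_add_sq_div hb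
    (show 0 < p * σ ^ 2 by positivity) (show 0 < P * σ ^ 2 by positivity)
    (mul_lt_mul_of_pos_right hpP (by positivity))
  rw [hR, hR]
  exact Real.logb_lt_logb one_lt_two (by positivity) (by simpa using hsnr)

/-- Theorem 2 of the paper: against a strategic reactive jammer (threshold always set
below the legitimate power, uniform jamming with power `Γ`), the leader's payoff
`p ↦ R(p, Γ)` attains its maximum over `(0, P]` uniquely at full power `p = P`, so
the Stackelberg-optimal pilot power is `P` and the equilibrium rate is `R(P, Γ)`. -/
theorem stackelberg_strategic_threshold_full_power
    (σ σJ Γ P : ℝ) (hσ : 0 < σ) (hσJ : 0 < σJ) (hΓ : 0 < Γ) (hP : 0 < P)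
    (R : ℝ → ℝ → ℝ)
    (hR : ∀ p γ, R p γ = Real.logb 2
      (1 + p * σ ^ 2 / (2 * (1 + γ * σJ ^ 2) + (1 + γ * σJ ^ 2) ^ 2 / (p * σ ^ 2)))) :
    ∀ p ∈ Set.Ioo (0 : ℝ) P, R p Γ < R P Γ :=
  stackelberg_strategic_threshold_full_power_general σ σJ Γ P hσ hΓ hP R hR
end
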